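/- Let a, b be real with 0 < |b| < 1, a > −(b−1)²/4, x₋ = ((b−1) − √((b−1)² + 4a))/2, γ = 1/((b − 1 − 2x₋)·√(x₋² + |b|)), and s* = 1/(1 − ln|b| / ln(√(x₋² + |b|) + |x₋|)). Then s* ∈ (0,1), and for every s ∈ (s*, 1) and every (x,y) ∈ ℝ², with V(x,y) = γ(1−s)(x + b·y) and σ₁(x) = √(x² + |b|) + |x|, σ₂(x) = |b|/σ₁(x), one has ln σ₁(x) + s·ln σ₂(x) + V(φ(x,y)) − V(x,y) < 0. -/

import Mathlib

/-!
On `t ≥ 0` the function `t ↦ log (√(t² + |b|) + t)` is concave (its derivative is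
`1 / √(t² + |b|)`), so `log σ₁(x)` lies below its tangent line at `t = |x₋|`. Since `x₋` and
`x₊ = x₋ + √((b-1)² + 4a)` are the roots of `x² - (b-1)x - a`, the increment `V(φ(x,y)) - V(x,y)`
is `-γ(1-s)(x - x₋)(x - x₊)`, and `γ` is chosen so that this quadratic dominates the linear
term of the tangent. What remains is `(1-s) log σ₁(x₋) + s log|b|`, which is negative exactly
when `s > s*`.
-/

open Real Set

/-- The Hénon map `φ(x,y) = (a + b y − x², x)`. -/
noncomputable def henon (a b : ℝ) (p : ℝ × ℝ) : ℝ × ℝ :=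
  (a + b * p.2 - p.1 ^ 2, p.1)

theorem ConcaveOn.le_add_mul_sub_of_hasDerivAt {S : Set ℝ} {f : ℝ → ℝ} {f' x y : ℝ}
    (hf : ConcaveOn ℝ S f) (hx : x ∈ S) (hy : y ∈ S) (hf' : HasDerivAt f f' x) :
    f y ≤ f x + f' * (y - x) := by
  rcases lt_trichotomy x y with hxy | rfl | hyx
  · have := hf.slope_le_of_hasDerivAt hx hy hxy hf'
    rw [slope_def_field, div_le_iff₀ (sub_pos.2 hxy)] at this
    linarith
  · simp
  · have := hf.le_slope_of_hasDerivAt hy hx hyx hf'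
    rw [slope_def_field, le_div_iff₀ (sub_pos.2 hyx)] at this
    linarith

theorem hasDerivAt_log_sqrt_sq_add_add {c : ℝ} (hc : 0 < c) (t : ℝ) :
    HasDerivAt (fun u ↦ log (√(u ^ 2 + c) + u)) (√(t ^ 2 + c))⁻¹ t := by
  have hpos : 0 < t ^ 2 + c := by positivity
  have hroot : 0 < √(t ^ 2 + c) := sqrt_pos.2 hpos
  have hsq : √(t ^ 2 + c) ^ 2 = t ^ 2 + c := sq_sqrt hpos.le
  have hσ : 0 < √(t ^ 2 + c) + t := by nlinarith [sq_abs t, neg_abs_le t]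
  have hsqrt : HasDerivAt (fun u ↦ √(u ^ 2 + c)) (1 / (2 * √(t ^ 2 + c)) * (2 * t)) t :=
    (hasDerivAt_sqrt hpos.ne').comp t (by simpa using (hasDerivAt_pow 2 t).add_const c)
  have hsum : HasDerivAt (fun u ↦ √(u ^ 2 + c) + u) (t / √(t ^ 2 + c) + 1) t :=
    (hsqrt.add (hasDerivAt_id' t)).congr_deriv (by field_simp)
  convert hsum.log hσ.ne' using 1
  field_simp
  ring

theorem concaveOn_log_sqrt_sq_add_add {c : ℝ} (hc : 0 < c) :
    ConcaveOn ℝ (Ici 0) (fun t ↦ log (√(t ^ 2 + c) + t)) := by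
  have hderiv := hasDerivAt_log_sqrt_sq_add_add hc
  refine AntitoneOn.concaveOn_of_deriv (convex_Ici 0)
    (fun t _ ↦ (hderiv t).continuousAt.continuousWithinAt)
    (fun t _ ↦ (hderiv t).differentiableAt.differentiableWithinAt) ?_
  intro u hu v _ huv
  rw [interior_Ici] at hu
  rw [(hderiv u).deriv, (hderiv v).deriv]
  gcongr
  exact hu.le

theorem log_sqrt_sq_add_add_abs_le {c : ℝ} (hc : 0 < c) {t₀ : ℝ} (ht₀ : 0 ≤ t₀) (x : ℝ) :
    log (√(x ^ 2 + c) + |x|) ≤ log (√(t₀ ^ 2 + c) + t₀) + (|x| - t₀) / √(t₀ ^ 2 + c) := by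
  have := (concaveOn_log_sqrt_sq_add_add hc).le_add_mul_sub_of_hasDerivAt ht₀
    (mem_Ici.2 (abs_nonneg x)) (hasDerivAt_log_sqrt_sq_add_add hc t₀)
  rwa [sq_abs, inv_mul_eq_div] at this

theorem mul_abs_sub_le_mul_add_sub {m r : ℝ} (hr : r ≤ 2 * m) (x : ℝ) :
    r * (|x| - m) ≤ (x + m) * (x + m - r) := by
  rcases le_total 0 x with hx | hx
  · rw [abs_of_nonneg hx]
    nlinarith [sq_nonneg (x - m)]
  · rw [abs_of_nonpos hx]
    nlinarith [sq_nonneg (x + m)]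

theorem log_sqrt_sq_add_add_abs_le_quadratic {c m r : ℝ} (hc : 0 < c) (hm : 0 ≤ m)
    (hr : 0 < r) (hrm : r ≤ 2 * m) (x : ℝ) :
    log (√(x ^ 2 + c) + |x|) ≤
      log (√(m ^ 2 + c) + m) + (x + m) * (x + m - r) / (r * √(m ^ 2 + c)) := by
  have hroot : 0 < √(m ^ 2 + c) := sqrt_pos.2 (by positivity)
  have hslope : (|x| - m) / √(m ^ 2 + c) ≤ (x + m) * (x + m - r) / (r * √(m ^ 2 + c)) := by
    rw [div_le_div_iff₀ hroot (mul_pos hr hroot)]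
    nlinarith [mul_le_mul_of_nonneg_left (mul_abs_sub_le_mul_add_sub hrm x) hroot.le]
  linarith [log_sqrt_sq_add_add_abs_le hc hm x]

theorem henon_fst_add_mul_snd_sub (a b x y : ℝ) :
    (henon a b (x, y)).1 + b * (henon a b (x, y)).2 - (x + b * y) = a + (b - 1) * x - x ^ 2 := by
  simp only [henon]
  ring

theorem one_lt_one_sub_div {L ℓ : ℝ} (hL : 0 < L) (hℓ : ℓ < 0) : 1 < 1 - ℓ / L := by
  linarith [div_neg_of_neg_of_pos hℓ hL]

theorem one_div_one_sub_div_mem_Ioo {L ℓ : ℝ} (hL : 0 < L) (hℓ : ℓ < 0) :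
    1 / (1 - ℓ / L) ∈ Ioo 0 1 :=
  have h := one_lt_one_sub_div hL hℓ
  ⟨by positivity, (div_lt_one (by linarith)).2 h⟩

theorem one_sub_mul_add_mul_neg_of_one_div_one_sub_div_lt {L ℓ s : ℝ} (hL : 0 < L) (hℓ : ℓ < 0)
    (hs : 1 / (1 - ℓ / L) < s) : (1 - s) * L + s * ℓ < 0 := by
  rw [div_lt_iff₀ (by linarith [one_lt_one_sub_div hL hℓ])] at hs
  field_simp at hs
  nlinarith

theorem henon_leonov_estimate (a b : ℝ)
    (hb0 : 0 < |b|) (hb1 : |b| < 1) (ha : a > -(b - 1) ^ 2 / 4)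
    (xm γ sstar : ℝ)
    (hxm : xm = ((b - 1) - Real.sqrt ((b - 1) ^ 2 + 4 * a)) / 2)
    (hγ : γ = 1 / ((b - 1 - 2 * xm) * Real.sqrt (xm ^ 2 + |b|)))
    (hs : sstar = 1 / (1 - Real.log |b| / Real.log (Real.sqrt (xm ^ 2 + |b|) + |xm|))) :
    sstar ∈ Set.Ioo (0 : ℝ) 1 ∧
    ∀ s ∈ Set.Ioo sstar 1, ∀ x y : ℝ,
      (Real.log (Real.sqrt (x ^ 2 + |b|) + |x|)
        + s * Real.log (|b| / (Real.sqrt (x ^ 2 + |b|) + |x|))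
        + (γ * (1 - s) * ((henon a b (x, y)).1 + b * (henon a b (x, y)).2)
           - γ * (1 - s) * (x + b * y))) < 0 := by
  have hD : 0 < (b - 1) ^ 2 + 4 * a := by linarith
  set r := √((b - 1) ^ 2 + 4 * a)
  have hr : 0 < r := sqrt_pos.2 hD
  have hr_sq : r ^ 2 = (b - 1) ^ 2 + 4 * a := sq_sqrt hD.le
  obtain ⟨m, rfl⟩ : ∃ m, xm = -m := ⟨-xm, (neg_neg xm).symm⟩
  have hb : b < 1 := lt_of_abs_lt hb1
  have hm : 0 < m := by linarith
  have hb_eq : b - 1 = r - 2 * m := by linarith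
  have ha_eq : a = m * r - m ^ 2 := by nlinarith
  simp only [neg_sq, abs_neg, abs_of_pos hm] at hγ hs
  have hroot_sq : √(m ^ 2 + |b|) ^ 2 = m ^ 2 + |b| := sq_sqrt (by positivity)
  have hL : 0 < log (√(m ^ 2 + |b|) + m) :=
    log_pos (by nlinarith [le_abs_self b, sqrt_nonneg (m ^ 2 + |b|)])
  have hlogb : log |b| < 0 := log_neg hb0 hb1
  refine ⟨hs ▸ one_div_one_sub_div_mem_Ioo hL hlogb, ?_⟩
  rintro s ⟨hs_gt, hs_lt⟩ x y
  have hbound := log_sqrt_sq_add_add_abs_le_quadratic hb0 hm.le hr (by linarith) x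
  have hsign := one_sub_mul_add_mul_neg_of_one_div_one_sub_div_lt hL hlogb (hs ▸ hs_gt)
  have hfixed : a + (b - 1) * x - x ^ 2 = -((x + m) * (x + m - r)) := by
    rw [ha_eq, hb_eq]
    ring
  have hγ_eq : γ = 1 / (r * √(m ^ 2 + |b|)) := by rw [hγ]; congr 2; linarith
  rw [← mul_sub, henon_fst_add_mul_snd_sub, hfixed, log_div hb0.ne' (by positivity), hγ_eq]
  rw [div_eq_mul_one_div _ (r * _)] at hbound
  nlinarith [mul_le_mul_of_nonneg_left hbound (sub_pos.2 hs_lt).le]
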